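/- arXiv:2107.06464 — 10 statements merged into one kernel-verified Lean document; each statement's English description precedes it below -/
import Mathlib

section
/- Let q = 2^n and let c be an element of the finite field F_{q^4} with c^{q^2+1} = 1 and c ≠ 1. Then the relative trace Tr from F_{q^4} to F_q of c, namely c + c^q + c^{q^2} + c^{q^3}, is nonzero. (Equivalently, c + c^q + c^{-1} + c^{-q} ≠ 0.) -/
/-!
Since `c ^ (q ^ 2) = c⁻¹`, the trace is `c + d + c⁻¹ + d⁻¹` with `d = c ^ q`, and over a field of
characteristic two this factors as `(c + d) (c d + 1) / (c d)`. So a vanishing trace forces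
`c ^ q = c` or `c ^ q = c⁻¹`; either way `c ^ (q ^ 2) = c`, whence `c⁻¹ = c`, i.e. `(c + 1) ^ 2 = 0`.
-/

theorem charP_two_of_card_eq_two_pow {K : Type*} [Field K] [Fintype K] {m : ℕ}
    (hcard : Fintype.card K = 2 ^ m) : CharP K 2 := by
  obtain ⟨p, hp, -, hprime, -⟩ := FiniteField.card' K
  have hdvd : p ∣ 2 ^ m := hcard ▸ (CharP.cast_eq_zero_iff K p _).mp (FiniteField.cast_card_eq_zero K)
  have hp2 : p = 2 := (Nat.prime_dvd_prime_iff_eq hprime Nat.prime_two).mp (hprime.dvd_of_dvd_pow hdvd)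
  exact hp2 ▸ hp

namespace CharTwo

variable {K : Type*} [Field K] [CharP K 2]

theorem eq_one_of_inv_eq_self {c : K} (hc : c ≠ 0) (h : c⁻¹ = c) : c = 1 := by
  rw [← sq_inj, one_pow, sq]
  nth_rewrite 1 [← h]
  exact inv_mul_cancel₀ hc

theorem eq_or_eq_inv_of_add_add_inv_add_inv_eq_zero {c d : K} (hc : c ≠ 0) (hd : d ≠ 0)
    (h : c + d + c⁻¹ + d⁻¹ = 0) : d = c ∨ d = c⁻¹ := by
  have hfactor : (c + d) * (c * d + 1) = c * d * (c + d + c⁻¹ + d⁻¹) := by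
    field_simp
    ring
  rw [h, mul_zero] at hfactor
  rcases mul_eq_zero.mp hfactor with hsum | hprod
  · exact Or.inl (CharTwo.add_eq_zero.mp hsum).symm
  · exact Or.inr (eq_inv_of_mul_eq_one_right (CharTwo.add_eq_zero.mp hprod))

end CharTwo

theorem stmt_0_general (n : ℕ) (q : ℕ) (hq : q = 2 ^ n)
    (K : Type*) [Field K] [Fintype K] (hcard : Fintype.card K = q ^ 4)
    (c : K) (hc : c ^ (q ^ 2 + 1) = 1) (hc1 : c ≠ 1) :
    c + c ^ q + c ^ (q ^ 2) + c ^ (q ^ 3) ≠ 0 := by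
  have : CharP K 2 := charP_two_of_card_eq_two_pow (m := n * 4) (by rw [hcard, hq, pow_mul])
  have hc0 : c ≠ 0 := by
    rintro rfl
    simp at hc
  have hinv : c ^ (q ^ 2) = c⁻¹ := eq_inv_of_mul_eq_one_left (by rwa [← pow_succ])
  have hiter : c ^ (q ^ 2) = (c ^ q) ^ q := by rw [← pow_mul, sq]
  have hcube : c ^ (q ^ 3) = (c ^ q)⁻¹ := by
    rw [pow_succ, pow_mul, hinv, inv_pow]
  intro htrace
  rw [hinv, hcube] at htrace
  have hfixed : c ^ (q ^ 2) = c := by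
    rcases CharTwo.eq_or_eq_inv_of_add_add_inv_add_inv_eq_zero hc0 (pow_ne_zero q hc0) htrace
      with hd | hd
    · rw [hiter, hd, hd]
    · rw [hiter, hd, inv_pow, hd, inv_inv]
  exact hc1 (CharTwo.eq_one_of_inv_eq_self hc0 (hinv ▸ hfixed))

theorem stmt_0 (n : ℕ) (hn : 0 < n) (q : ℕ) (hq : q = 2 ^ n)
    (K : Type*) [Field K] [Fintype K] (hcard : Fintype.card K = q ^ 4)
    (c : K) (hc : c ^ (q ^ 2 + 1) = 1) (hc1 : c ≠ 1) :
    c + c ^ q + c ^ (q ^ 2) + c ^ (q ^ 3) ≠ 0 :=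
  stmt_0_general n q hq K hcard c hc hc1
end

section
/- Let q = 2^n. Then gcd(q^3 + q^2 + q - 1, q^4 - 1) = 1; in particular the power map x ↦ x^{q^3+q^2+q-1} is a permutation of F_{q^4}. -/
/-!
With `d = q³ + q² + q - 1` and `m = q⁴ - 1` one has `d² = (q² + 2q + 3) m + 4`, so every common
divisor of `d` and `m` divides `4`; for even `q` the number `m` is odd, hence `gcd(d, m) = 1`.
Since `Kˣ` is a group of order `q⁴ - 1`, the `d`-th power map is then a bijection of `Kˣ`, and it
fixes `0`.
-/

theorem sq_pow_three_add_sq_add_self_sub_one (q : ℕ) (hq : 0 < q) :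
    (q ^ 3 + q ^ 2 + q - 1) ^ 2 = 4 + (q ^ 4 - 1) * (q ^ 2 + 2 * q + 3) := by
  have h₁ : 1 ≤ q ^ 3 + q ^ 2 + q := by omega
  have h₄ : 1 ≤ q ^ 4 := Nat.one_le_pow _ _ hq
  zify [h₁, h₄]
  ring

theorem coprime_pow_three_add_sq_add_self_sub_one_pow_four_sub_one {q : ℕ} (hq : Even q)
    (hq₀ : 0 < q) : Nat.Coprime (q ^ 3 + q ^ 2 + q - 1) (q ^ 4 - 1) := by
  rw [← Nat.coprime_pow_left_iff two_pos, sq_pow_three_add_sq_add_self_sub_one q hq₀,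
    Nat.coprime_add_mul_left_left, show 4 = 2 ^ 2 by rfl, Nat.coprime_pow_left_iff two_pos,
    Nat.coprime_two_left]
  exact Nat.Even.sub_odd (Nat.one_le_pow _ _ hq₀) (hq.pow_of_ne_zero four_ne_zero) odd_one

theorem pow_bijective_of_coprime_card_sub_one {M : Type*} [GroupWithZero M] [Finite M] {k : ℕ}
    (h : (Nat.card M - 1).Coprime k) (hk : k ≠ 0) : Function.Bijective (fun x : M => x ^ k) := by
  have hunits : Function.Injective (· ^ k : Mˣ → Mˣ) :=
    (Nat.card_units M ▸ h).pow_left_bijective.injective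
  refine Finite.injective_iff_bijective.mp fun x y hxy => ?_
  rcases eq_or_ne x 0 with rfl | hx
  · exact ((pow_eq_zero_iff hk).mp (hxy.symm.trans (zero_pow hk))).symm
  have hy : y ≠ 0 := by
    rintro rfl
    exact hx ((pow_eq_zero_iff hk).mp (hxy.trans (zero_pow hk)))
  simpa using congrArg Units.val
    (@hunits (Units.mk0 x hx) (Units.mk0 y hy) (Units.ext (by simpa using hxy)))

theorem stmt_1 (n : ℕ) (hn : 0 < n) (q : ℕ) (hq : q = 2 ^ n)
    (K : Type*) [Field K] [Fintype K] (hcard : Fintype.card K = q ^ 4) :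
    Nat.gcd (q ^ 3 + q ^ 2 + q - 1) (q ^ 4 - 1) = 1 ∧
      Function.Bijective (fun x : K => x ^ (q ^ 3 + q ^ 2 + q - 1)) := by
  have hq_even : Even q := hq ▸ (Nat.even_pow' hn.ne').mpr even_two
  have hq₀ : 0 < q := hq ▸ Nat.two_pow_pos n
  have hcop := coprime_pow_three_add_sq_add_self_sub_one_pow_four_sub_one hq_even hq₀
  refine ⟨hcop, pow_bijective_of_coprime_card_sub_one ?_ ?_⟩
  · rw [Nat.card_eq_fintype_card, hcard]
    exact hcop.symm
  · have := Nat.one_le_pow 2 q hq₀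
    omega
end

section
/- Let n = 2m and let a, b ∈ F_{2^n}^* satisfy Tr_{F_{2^n}/F_2}(b/a^2) = 0. Then the quadratic equation x^2 + a x + b = 0 has both of its solutions in the unit circle μ_{2^m+1} = {x ∈ F_{2^n}^* : x^{2^m+1} = 1} if and only if b = a^{1-2^m} and Tr_{F_{2^m}/F_2}(1/a^{1+2^m}) = 1. -/
/-! Write `T_k(c) = ∑_{j<k} c^(2^j)` and `q = 2^m`. In characteristic 2 the substitution
`x = a u` turns `x² + a x + b = 0` into the Artin–Schreier equation `u² + u = b / a²`, whose
roots are `u` and `u + 1`. If `u² + u = c` then `u^q = u + T_m(c)`, hence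
`u^(q+1) = c + (T_m(c) - 1) u`, so `u^(q+1) = c` exactly when `T_m(c) = 1`.

If both roots `x, y` lie on the unit circle then `x^q = x⁻¹`, `y^q = y⁻¹`, and Vieta gives
`a^q = x⁻¹ + y⁻¹ = a / b`, i.e. `b = a^(1-q)`. Then `c = b / a² = a^(-(q+1))`, and the circle
condition `(a u)^(q+1) = 1` is `u^(q+1) = c`, i.e. `T_m(c) = 1`. Conversely `c` is a norm, so
`c^q = c` and `T_{2m}(c) = 2 T_m(c) = 0`; this makes `u² + u = c` solvable in `K`, and both
`a u` and `a (u + 1)` are then roots on the circle. -/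

open Finset Polynomial

theorem add_eq_neg_and_mul_eq_of_quadratic_eq_zero {R : Type*} [CommRing R] [NoZeroDivisors R]
    {a b x y : R} (hxy : x ≠ y) (hx : x ^ 2 + a * x + b = 0) (hy : y ^ 2 + a * y + b = 0) :
    x + y = -a ∧ x * y = b := by
  have hprod : (x - y) * (x + y + a) = 0 := by linear_combination hx - hy
  have hsum : x + y = -a :=
    eq_neg_of_add_eq_zero_left ((mul_eq_zero.mp hprod).resolve_left (sub_ne_zero.mpr hxy))
  exact ⟨hsum, by linear_combination x * hsum - hx⟩

theorem sum_range_two_mul_pow_two_pow_of_pow_eq_self {R : Type*} [CommSemiring R] {m : ℕ}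
    {c : R} (hc : c ^ 2 ^ m = c) :
    ∑ i ∈ range (2 * m), c ^ 2 ^ i = 2 * ∑ i ∈ range m, c ^ 2 ^ i := by
  simp only [two_mul, sum_range_add, pow_add, pow_mul, hc]

theorem pow_pow_add_one_eq_of_card_eq_sq {K : Type*} [Field K] [Fintype K] {q : ℕ}
    (hcard : Fintype.card K = q ^ 2) (x : K) : (x ^ (q + 1)) ^ q = x ^ (q + 1) := by
  rw [← pow_mul, add_mul, one_mul, pow_add, mul_comm q, ← sq, ← hcard, FiniteField.pow_card,
    ← pow_succ']

section CharTwo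

variable {R : Type*} [CommRing R] [CharP R 2]

theorem pow_two_pow_eq_add_sum_of_sq_add_self_eq {u c : R} (h : u ^ 2 + u = c) (i : ℕ) :
    u ^ 2 ^ i = u + ∑ j ∈ range i, c ^ 2 ^ j := by
  induction i with
  | zero => simp
  | succ i ih =>
    have hu2 : u ^ 2 = u + c := by
      rw [← h, add_comm, add_assoc, CharTwo.add_self_eq_zero, add_zero]
    rw [pow_succ, pow_mul, ih, CharTwo.add_sq, sum_pow_char, sum_range_succ', hu2]
    simp only [← pow_mul, ← pow_succ, pow_zero, pow_one]
    ring

theorem pow_two_pow_add_one_eq_iff [NoZeroDivisors R] {u c : R} (hc : c ≠ 0)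
    (h : u ^ 2 + u = c) (m : ℕ) :
    u ^ (2 ^ m + 1) = c ↔ ∑ j ∈ range m, c ^ 2 ^ j = 1 := by
  have hu : u ≠ 0 := by rintro rfl; simp [eq_comm, hc] at h
  rw [pow_succ, pow_two_pow_eq_add_sum_of_sq_add_self_eq h, ← sub_eq_zero,
    ← sub_eq_zero (b := 1)]
  have hfactor : (u + ∑ j ∈ range m, c ^ 2 ^ j) * u - c = (∑ j ∈ range m, c ^ 2 ^ j - 1) * u := by
    rw [← h]; ring
  rw [hfactor, mul_eq_zero, or_iff_left hu]

end CharTwo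

theorem exists_sq_add_self_eq_of_sum_pow_two_pow_eq_zero {K : Type*} [Field K] [Fintype K]
    [CharP K 2] {n : ℕ} (hcard : Fintype.card K = 2 ^ n) {c : K}
    (hc : ∑ i ∈ range n, c ^ 2 ^ i = 0) : ∃ u : K, u ^ 2 + u = c := by
  set q : K[X] := X ^ 2 + X - C c
  -- `q` divides every `q ^ 2 ^ j`, and these sum to `X ^ 2 ^ n - X`, which splits over `K`.
  have hsum : ∑ j ∈ range n, q ^ 2 ^ j = X ^ Nat.card K - X := by
    simp only [q, sub_pow_char_pow, sum_sub_distrib, ← C_pow, ← map_sum, hc, map_zero, sub_zero,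
      Nat.card_eq_fintype_card, hcard, pow_two_pow_eq_add_sum_of_sq_add_self_eq rfl n,
      add_sub_cancel_left]
  have hdvd : q ∣ X ^ Nat.card K - X :=
    hsum ▸ dvd_sum fun j _ => dvd_pow_self q (pow_ne_zero j two_ne_zero)
  have hne : (X ^ Nat.card K - X : K[X]) ≠ 0 :=
    FiniteField.X_pow_card_sub_X_ne_zero K
      (Nat.card_eq_fintype_card (α := K) ▸ Fintype.one_lt_card)
  have hdeg : q.degree ≠ 0 := by
    rw [show q.degree = 2 by simp only [q]; compute_degree!]; decide
  obtain ⟨u, hu⟩ := (splits_X_pow_nat_card_sub_X.of_dvd hne hdvd).exists_eval_eq_zero hdeg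
  exact ⟨u, by simpa [q, sub_eq_zero] using hu⟩

theorem eq_mul_inv_pow_of_quadratic_roots_pow_add_one_eq_one {K : Type*} [Field K] [CharP K 2]
    {m : ℕ} {a b x y : K} (hxy : x ≠ y) (hx : x ^ 2 + a * x + b = 0)
    (hy : y ^ 2 + a * y + b = 0) (hxq : x ^ (2 ^ m + 1) = 1) (hyq : y ^ (2 ^ m + 1) = 1) :
    b = a * (a ^ 2 ^ m)⁻¹ := by
  obtain ⟨hsum, hprod⟩ := add_eq_neg_and_mul_eq_of_quadratic_eq_zero hxy hx hy
  rw [CharTwo.neg_eq] at hsum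
  have hx0 : x ≠ 0 := by rintro rfl; simp at hxq
  have hy0 : y ≠ 0 := by rintro rfl; simp at hyq
  have hxinv : x ^ 2 ^ m = x⁻¹ := eq_inv_of_mul_eq_one_left (by rwa [← pow_succ])
  have hyinv : y ^ 2 ^ m = y⁻¹ := eq_inv_of_mul_eq_one_left (by rwa [← pow_succ])
  have ha : a ^ 2 ^ m = a * b⁻¹ := by
    rw [← hsum, ← hprod, add_pow_char_pow, hxinv, hyinv]
    field_simp
    ring
  have ha0 : a ≠ 0 := by
    rintro rfl
    exact hxy (by rw [← sub_eq_zero, CharTwo.sub_eq_add, hsum])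
  rw [ha, mul_inv, inv_inv, ← mul_assoc, mul_inv_cancel₀ ha0, one_mul]

theorem quadratic_eq_zero_iff_sq_add_self_eq {K : Type*} [Field K] [CharP K 2] {a : K}
    (ha : a ≠ 0) (b v : K) : (a * v) ^ 2 + a * (a * v) + b = 0 ↔ v ^ 2 + v = b / a ^ 2 := by
  rw [eq_div_iff (pow_ne_zero 2 ha), CharTwo.add_eq_zero]
  ring_nf

theorem mul_pow_two_pow_add_one_eq_one_iff {K : Type*} [Field K] [CharP K 2] {a v : K}
    (ha : a ≠ 0) (m : ℕ) (hv : v ^ 2 + v = (a ^ (2 ^ m + 1))⁻¹) :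
    (a * v) ^ (2 ^ m + 1) = 1 ↔ ∑ j ∈ range m, ((a ^ (2 ^ m + 1))⁻¹) ^ 2 ^ j = 1 := by
  rw [mul_pow, mul_comm, mul_eq_one_iff_eq_inv₀ (pow_ne_zero _ ha),
    pow_two_pow_add_one_eq_iff (inv_ne_zero (pow_ne_zero _ ha)) hv]

theorem stmt_4_general (m : ℕ)
    (K : Type*) [Field K] [Fintype K] (hcard : Fintype.card K = 2 ^ (2 * m))
    (a b : K) (ha : a ≠ 0) :
    (∃ x y : K, x ≠ y ∧ x ^ 2 + a * x + b = 0 ∧ y ^ 2 + a * y + b = 0 ∧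
        x ^ (2 ^ m + 1) = 1 ∧ y ^ (2 ^ m + 1) = 1) ↔
      b = a * (a ^ 2 ^ m)⁻¹ ∧
        ∑ i ∈ Finset.range m, ((a ^ (2 ^ m + 1))⁻¹) ^ 2 ^ i = 1 := by
  have : CharP K 2 := charP_of_card_eq_prime_pow hcard
  set c := (a ^ (2 ^ m + 1))⁻¹ with hc
  have hbc : b = a * (a ^ 2 ^ m)⁻¹ ↔ b / a ^ 2 = c := by
    rw [hc, div_eq_iff (pow_ne_zero 2 ha), pow_succ]
    constructor <;> rintro rfl <;> field_simp
  constructor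
  · rintro ⟨x, y, hxy, hx, hy, hxq, hyq⟩
    have hb := eq_mul_inv_pow_of_quadratic_roots_pow_add_one_eq_one hxy hx hy hxq hyq
    rw [← mul_div_cancel₀ x ha] at hx hxq
    have hu := (quadratic_eq_zero_iff_sq_add_self_eq ha b _).mp hx
    rw [hbc.mp hb] at hu
    exact ⟨hb, (mul_pow_two_pow_add_one_eq_one_iff ha m hu).mp hxq⟩
  · rintro ⟨hb, hs⟩
    have hcq : c ^ 2 ^ m = c := by
      rw [hc, inv_pow, pow_pow_add_one_eq_of_card_eq_sq (by rw [hcard, pow_mul']) a]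
    obtain ⟨u, hu⟩ := exists_sq_add_self_eq_of_sum_pow_two_pow_eq_zero hcard
      (by rw [sum_range_two_mul_pow_two_pow_of_pow_eq_self hcq, hs, mul_one, CharTwo.two_eq_zero])
    have hu' : (u + 1) ^ 2 + (u + 1) = c := by
      rw [← hu, CharTwo.add_sq, one_pow, add_add_add_comm, CharTwo.add_self_eq_zero, add_zero]
    have hroot : ∀ v, v ^ 2 + v = c →
        (a * v) ^ 2 + a * (a * v) + b = 0 ∧ (a * v) ^ (2 ^ m + 1) = 1 := fun v hv =>
      ⟨(quadratic_eq_zero_iff_sq_add_self_eq ha b v).mpr (hv.trans (hbc.mp hb).symm),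
        (mul_pow_two_pow_add_one_eq_one_iff ha m hv).mpr hs⟩
    refine ⟨a * u, a * (u + 1), ?_, (hroot u hu).1, (hroot _ hu').1, (hroot u hu).2,
      (hroot _ hu').2⟩
    simpa [mul_add] using ha

theorem stmt_4 (m : ℕ) (hm : 0 < m)
    (K : Type*) [Field K] [Fintype K] (hcard : Fintype.card K = 2 ^ (2 * m))
    (a b : K) (ha : a ≠ 0) (hb : b ≠ 0)
    (htr : ∑ i ∈ Finset.range (2 * m), (b / a ^ 2) ^ 2 ^ i = 0) :
    (∃ x y : K, x ≠ y ∧ x ^ 2 + a * x + b = 0 ∧ y ^ 2 + a * y + b = 0 ∧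
        x ^ (2 ^ m + 1) = 1 ∧ y ^ (2 ^ m + 1) = 1) ↔
      b = a * (a ^ 2 ^ m)⁻¹ ∧
        ∑ i ∈ Finset.range m, ((a ^ (2 ^ m + 1))⁻¹) ^ 2 ^ i = 1 :=
  stmt_4_general m K hcard a b ha
end

section
/- Let n = 2m and let a, b ∈ F_{2^n}^* satisfy Tr_{F_{2^n}/F_2}(b/a^2) = 0. Then x^2 + a x + b = 0 has exactly one solution in the unit circle μ_{2^m+1} if and only if b ≠ a^{1-2^m} and (1 + b^{1+2^m})(1 + a^{1+2^m} + b^{1+2^m}) + a^2 b^{2^m} + a^{2^{m+1}} b = 0. -/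
/-!
Write `σ x = x ^ 2 ^ m`, an involutive automorphism, so that the unit circle is `x * σ x = 1`.
Applying `σ` to the equation at a root `x` on the circle and eliminating `σ x` gives the linear
relation `x * c = d` with `c = σ a + a * σ b` and `d = 1 + b * σ b`. If `c = 0`, i.e.
`b = a / σ a`, roots on the circle come in pairs `x, x + a`. Otherwise the only candidate is
`x₀ = d / c`, and the polynomial condition equals both `c ^ 2 * (x₀ ^ 2 + a * x₀ + b)` and
`d ^ 2 + c * σ c` (in characteristic two), so it vanishes iff `x₀` is a root iff `x₀` lies on
the circle.
-/

theorem iterateFrobenius_involutive {K : Type*} [Field K] [Fintype K] {p m : ℕ} [ExpChar K p]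
    (hcard : Fintype.card K = p ^ (2 * m)) : Function.Involutive (iterateFrobenius K p m) := by
  intro x
  rw [iterateFrobenius_def, iterateFrobenius_def, ← pow_mul, ← pow_add, ← two_mul, ← hcard,
    FiniteField.pow_card]

def unitCircleDiscriminant {R : Type*} [CommRing R] (σ : R →+* R) (a b : R) : R :=
  (1 + b * σ b) * (1 + a * σ a + b * σ b) + a ^ 2 * σ b + σ a ^ 2 * b

theorem unitCircleDiscriminant_eq_sq_add_mul_map {R : Type*} [CommRing R] (σ : R →+* R)
    (a b : R) :
    unitCircleDiscriminant σ a b = (1 + b * σ b) ^ 2 + (σ a + a * σ b) * (a + σ a * b) := by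
  unfold unitCircleDiscriminant
  ring

section CharTwo

variable {K : Type*} [Field K] [CharP K 2] (σ : K →+* K) {a b x : K}

theorem unitCircleDiscriminant_eq_of_mul_eq (hx : x * (σ a + a * σ b) = 1 + b * σ b) :
    unitCircleDiscriminant σ a b = (σ a + a * σ b) ^ 2 * (x ^ 2 + a * x + b) := by
  unfold unitCircleDiscriminant
  linear_combination (norm := (ring_nf; reduce_mod_char!))
    (x * (σ a + a * σ b) + 1 + b * σ b + a * (σ a + a * σ b)) * hx

theorem mul_add_mul_map_eq_of_root (hx : x ^ 2 + a * x + b = 0) (hunit : x * σ x = 1) :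
    x * (σ a + a * σ b) = 1 + b * σ b := by
  have hσx : σ x ^ 2 + σ a * σ x + σ b = 0 := by simpa using congrArg σ hx
  linear_combination (norm := (ring_nf; reduce_mod_char!))
    x ^ 2 * hσx + σ b * hx - (x * σ x + 1 + σ a * x) * hunit

variable {σ}

theorem add_mul_map_ne_zero (hσ : Function.Involutive σ) (ha : a ≠ 0) (hb : b ≠ a * (σ a)⁻¹) :
    σ a + a * σ b ≠ 0 := by
  intro hc
  have hσa : σ a = a * σ b := by linear_combination (norm := (ring_nf; reduce_mod_char!)) hc
  have ha' : a = σ a * b := by simpa [hσ a, hσ b] using congrArg σ hσa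
  have hσa0 : σ a ≠ 0 := (map_ne_zero σ).2 ha
  exact hb ((eq_mul_inv_iff_mul_eq₀ hσa0).2 (ha'.trans (mul_comm _ _)).symm)

theorem ne_mul_inv_of_existsUnique_root (hσ : Function.Involutive σ) (ha : a ≠ 0)
    (h : ∃! x, x ^ 2 + a * x + b = 0 ∧ x * σ x = 1) : b ≠ a * (σ a)⁻¹ := by
  obtain ⟨x, ⟨hx, hunit⟩, huniq⟩ := h
  intro hb
  have hab : a * σ b = σ a := by
    have hσa0 : σ a ≠ 0 := (map_ne_zero σ).2 ha
    have : σ a * b = a := by rw [hb]; field_simp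
    simpa [hσ a, hσ b, mul_comm] using congrArg σ this
  have hσx : σ x ^ 2 + σ a * σ x + σ b = 0 := by simpa using congrArg σ hx
  have hxa : (x + a) ^ 2 + a * (x + a) + b = 0 := by
    linear_combination (norm := (ring_nf; reduce_mod_char!)) hx
  have hxa_unit : (x + a) * σ (x + a) = 1 := by
    rw [map_add]
    linear_combination a * x * hσx + (1 - a * σ x - a * σ a) * hunit - x * hab
  exact ha (by simpa using huniq (x + a) ⟨hxa, hxa_unit⟩)

theorem existsUnique_root_of_unitCircleDiscriminant_eq_zero (hσ : Function.Involutive σ)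
    (ha : a ≠ 0) (hb : b ≠ a * (σ a)⁻¹) (hE : unitCircleDiscriminant σ a b = 0) :
    ∃! x, x ^ 2 + a * x + b = 0 ∧ x * σ x = 1 := by
  have hc := add_mul_map_ne_zero hσ ha hb
  have hx₀ : (1 + b * σ b) / (σ a + a * σ b) * (σ a + a * σ b) = 1 + b * σ b :=
    div_mul_cancel₀ _ hc
  refine ⟨(1 + b * σ b) / (σ a + a * σ b), ⟨?root, ?unit⟩, ?unique⟩
  case root =>
    rw [unitCircleDiscriminant_eq_of_mul_eq σ hx₀] at hE
    exact (mul_eq_zero.1 hE).resolve_left (pow_ne_zero 2 hc)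
  case unit =>
    have hσc : σ (σ a + a * σ b) = a + σ a * b := by simp [hσ a, hσ b]
    have hσd : σ (1 + b * σ b) = 1 + b * σ b := by simp [hσ b, mul_comm]
    have hσc0 : a + σ a * b ≠ 0 := hσc ▸ (map_ne_zero σ).2 hc
    rw [unitCircleDiscriminant_eq_sq_add_mul_map] at hE
    rw [map_div₀, hσc, hσd, div_mul_div_comm, div_eq_one_iff_eq (mul_ne_zero hc hσc0)]
    linear_combination (norm := (ring_nf; reduce_mod_char!)) hE
  case unique =>
    rintro y ⟨hy, hyunit⟩
    exact mul_right_cancel₀ hc ((mul_add_mul_map_eq_of_root σ hy hyunit).trans hx₀.symm)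

theorem existsUnique_root_mul_map_eq_one_iff (hσ : Function.Involutive σ) (ha : a ≠ 0) :
    (∃! x, x ^ 2 + a * x + b = 0 ∧ x * σ x = 1) ↔
      b ≠ a * (σ a)⁻¹ ∧ unitCircleDiscriminant σ a b = 0 := by
  refine ⟨fun h ↦ ⟨ne_mul_inv_of_existsUnique_root hσ ha h, ?_⟩,
    fun ⟨hb, hE⟩ ↦ existsUnique_root_of_unitCircleDiscriminant_eq_zero hσ ha hb hE⟩
  obtain ⟨x, ⟨hx, hunit⟩, -⟩ := h
  rw [unitCircleDiscriminant_eq_of_mul_eq σ (mul_add_mul_map_eq_of_root σ hx hunit), hx, mul_zero]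

end CharTwo

theorem stmt_5_general (m : ℕ)
    (K : Type*) [Field K] [Fintype K] (hcard : Fintype.card K = 2 ^ (2 * m))
    (a b : K) (ha : a ≠ 0) :
    (∃! x : K, x ^ 2 + a * x + b = 0 ∧ x ^ (2 ^ m + 1) = 1) ↔
      b ≠ a * (a ^ 2 ^ m)⁻¹ ∧
        (1 + b ^ (2 ^ m + 1)) * (1 + a ^ (2 ^ m + 1) + b ^ (2 ^ m + 1)) +
            a ^ 2 * b ^ 2 ^ m + a ^ 2 ^ (m + 1) * b = 0 := by
  have : CharP K 2 := charP_of_card_eq_prime_pow hcard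
  have hσ := iterateFrobenius_involutive (p := 2) hcard
  have hpow (x : K) : x ^ (2 ^ m + 1) = x * iterateFrobenius K 2 m x := pow_succ' x _
  have hsq : a ^ 2 ^ (m + 1) = iterateFrobenius K 2 m a ^ 2 := by
    rw [iterateFrobenius_def, pow_succ, pow_mul]
  simp only [hpow, hsq]
  exact existsUnique_root_mul_map_eq_one_iff hσ ha

theorem stmt_5 (m : ℕ) (hm : 0 < m)
    (K : Type*) [Field K] [Fintype K] (hcard : Fintype.card K = 2 ^ (2 * m))
    (a b : K) (ha : a ≠ 0) (hb : b ≠ 0)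
    (htr : ∑ i ∈ Finset.range (2 * m), (b / a ^ 2) ^ 2 ^ i = 0) :
    (∃! x : K, x ^ 2 + a * x + b = 0 ∧ x ^ (2 ^ m + 1) = 1) ↔
      b ≠ a * (a ^ 2 ^ m)⁻¹ ∧
        (1 + b ^ (2 ^ m + 1)) * (1 + a ^ (2 ^ m + 1) + b ^ (2 ^ m + 1)) +
            a ^ 2 * b ^ 2 ^ m + a ^ 2 ^ (m + 1) * b = 0 :=
  stmt_5_general m K hcard a b ha
end

section
/- Let q = 2^n and c ∈ F_{q^4} with c^{q^2+1} = 1, c ≠ 1. Write Tr for the relative trace from F_{q^4} to F_q. For v ∈ F_{q^4}, if Tr(c v^{1+q}) · Tr(c^{1+q} v^{2q}) ≠ 0, then the absolute trace from F_q to F_2 of Tr(c v^{1+q}) / Tr(c^{1+q} v^{2q}) equals 1. -/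
/-! With `σ x = x ^ q`, put `μ = c v + σ c σ² v` and `D = μ + c σ μ`. Since `σ² c = c⁻¹`, a
direct expansion gives `σ c · Tr (c v^{1+q}) = μ σ μ`, `c σ c · Tr (c^{1+q} v^{2q}) = D²` and
`σ D = c⁻¹ D`. In characteristic 2 this makes `w = μ / D` a root of the Artin–Schreier equation
`σ w = w + 1`, and the ratio of the two traces equals `w² + w`, whose absolute trace telescopes to
`w ^ q + w = 1`. -/

/-- The relative trace from `F_{q^4}` to `F_q`, computed in the big field. -/
def Tr4 {K : Type*} [Field K] (q : ℕ) (x : K) : K :=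
  x + x ^ q + x ^ (q ^ 2) + x ^ (q ^ 3)

section RelativeTrace

variable {K : Type*} [Field K]

def relTrace (σ : K →+* K) (x : K) : K :=
  x + σ x + σ (σ x) + σ (σ (σ x))

theorem Tr4_two_pow_eq_relTrace [CharP K 2] (n : ℕ) (x : K) :
    Tr4 (2 ^ n) x = relTrace (iterateFrobenius K 2 n) x := by
  simp only [Tr4, relTrace, iterateFrobenius_def, ← pow_mul]
  ring_nf

def twistedSum (σ : K →+* K) (c v : K) : K :=
  c * v + σ c * σ (σ v)

variable (σ : K →+* K) {c v : K}

theorem map_mul_relTrace_eq_twistedSum_mul_map (hc : σ (σ c) * c = 1) (hv : σ (σ (σ (σ v))) = v) :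
    σ c * relTrace σ (c * v * σ v) =
      twistedSum σ c v * σ (twistedSum σ c v) := by
  have hc0 : c ≠ 0 := right_ne_zero_of_mul_eq_one hc
  have hcinv : σ (σ c) = c⁻¹ := eq_inv_of_mul_eq_one_left hc
  have hσc0 : σ c ≠ 0 := (map_ne_zero σ).2 hc0
  simp only [relTrace, twistedSum, map_add, map_mul, hcinv, map_inv₀, hv]
  field_simp
  ring

theorem mul_map_mul_relTrace_eq_sq [CharP K 2] (hc : σ (σ c) * c = 1)
    (hv : σ (σ (σ (σ v))) = v) :
    c * σ c * relTrace σ (c * σ c * σ v ^ 2) =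
      (twistedSum σ c v + c * σ (twistedSum σ c v)) ^ 2 := by
  have hc0 : c ≠ 0 := right_ne_zero_of_mul_eq_one hc
  have hcinv : σ (σ c) = c⁻¹ := eq_inv_of_mul_eq_one_left hc
  have hσc0 : σ c ≠ 0 := (map_ne_zero σ).2 hc0
  simp only [relTrace, twistedSum, map_add, map_mul, map_pow, hcinv, map_inv₀, inv_inv, hv,
    CharTwo.add_sq, mul_pow]
  field_simp
  ring

theorem map_twistedSum_add_mul_map_eq_inv_mul (hc : σ (σ c) * c = 1) (hv : σ (σ (σ (σ v))) = v) :
    σ (twistedSum σ c v + c * σ (twistedSum σ c v)) =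
      c⁻¹ * (twistedSum σ c v + c * σ (twistedSum σ c v)) := by
  have hc0 : c ≠ 0 := right_ne_zero_of_mul_eq_one hc
  have hcinv : σ (σ c) = c⁻¹ := eq_inv_of_mul_eq_one_left hc
  have hσc0 : σ c ≠ 0 := (map_ne_zero σ).2 hc0
  simp only [twistedSum, map_add, map_mul, hcinv, map_inv₀, hv]
  field_simp
  ring

theorem exists_map_eq_add_one_relTrace_div_eq [CharP K 2] (hc : σ (σ c) * c = 1)
    (hv : σ (σ (σ (σ v))) = v) (hB : relTrace σ (c * σ c * σ v ^ 2) ≠ 0) :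
    ∃ w, σ w = w + 1 ∧
      relTrace σ (c * v * σ v) / relTrace σ (c * σ c * σ v ^ 2) = w ^ 2 + w := by
  have hc0 : c ≠ 0 := right_ne_zero_of_mul_eq_one hc
  have hσc0 : σ c ≠ 0 := (map_ne_zero σ).2 hc0
  have hA := map_mul_relTrace_eq_twistedSum_mul_map σ hc hv
  have hBsq := mul_map_mul_relTrace_eq_sq σ hc hv
  have hσD := map_twistedSum_add_mul_map_eq_inv_mul σ hc hv
  set μ := twistedSum σ c v
  set D := μ + c * σ μ
  have hD0 : D ≠ 0 := by
    rintro hD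
    rw [hD, zero_pow two_ne_zero] at hBsq
    exact hB (by simpa [hc0, hσc0] using hBsq)
  have hμD : μ + D = c * σ μ := by
    rw [← add_assoc, CharTwo.add_self_eq_zero, zero_add]
  refine ⟨μ / D, ?_, ?_⟩
  · rw [map_div₀, hσD, div_add_one hD0, hμD]
    field_simp
  · rw [eq_div_of_mul_eq hσc0 ((mul_comm _ _).trans hA),
      eq_div_of_mul_eq (mul_ne_zero hc0 hσc0) ((mul_comm _ _).trans hBsq)]
    field_simp
    rw [hμD]
    ring

end RelativeTrace

theorem sum_range_sq_add_self_pow_two_pow {R : Type*} [CommRing R] [CharP R 2] (w : R) (n : ℕ) :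
    ∑ i ∈ Finset.range n, (w ^ 2 + w) ^ 2 ^ i = w ^ 2 ^ n + w := by
  induction n with
  | zero => simp [CharTwo.add_self_eq_zero]
  | succ n ih =>
    rw [Finset.sum_range_succ, ih, add_pow_char_pow, ← pow_mul, ← pow_succ']
    linear_combination w ^ 2 ^ n * CharTwo.two_eq_zero (R := R)

theorem stmt_8_general (n : ℕ) (q : ℕ) (hq : q = 2 ^ n)
    (K : Type*) [Field K] [Fintype K] (hcard : Fintype.card K = q ^ 4)
    (c : K) (hc : c ^ (q ^ 2 + 1) = 1) (v : K)
    (h : Tr4 q (c * v ^ (1 + q)) * Tr4 q (c ^ (1 + q) * v ^ (2 * q)) ≠ 0) :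
    ∑ i ∈ Finset.range n,
        (Tr4 q (c * v ^ (1 + q)) / Tr4 q (c ^ (1 + q) * v ^ (2 * q))) ^ 2 ^ i = 1 := by
  subst hq
  have : CharP K 2 := charP_of_card_eq_prime_pow (hcard.trans (pow_mul 2 n 4).symm)
  set σ := iterateFrobenius K 2 n
  have hσ : ∀ x : K, σ (σ (σ (σ x))) = x := fun x ↦ by
    simp only [σ, iterateFrobenius_def, ← pow_mul]
    convert FiniteField.pow_card x using 2
    rw [hcard]
    ring
  have hσc : σ (σ c) * c = 1 := by
    rw [← hc, pow_succ, iterateFrobenius_def, iterateFrobenius_def, ← pow_mul, sq]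
  have hA : Tr4 (2 ^ n) (c * v ^ (1 + 2 ^ n)) = relTrace σ (c * v * σ v) := by
    rw [Tr4_two_pow_eq_relTrace]
    congr 1
    rw [iterateFrobenius_def]
    ring
  have hB : Tr4 (2 ^ n) (c ^ (1 + 2 ^ n) * v ^ (2 * 2 ^ n)) =
      relTrace σ (c * σ c * σ v ^ 2) := by
    rw [Tr4_two_pow_eq_relTrace]
    congr 1
    rw [iterateFrobenius_def, iterateFrobenius_def]
    ring
  rw [hA, hB] at h ⊢
  obtain ⟨w, hw, hratio⟩ :=
    exists_map_eq_add_one_relTrace_div_eq σ hσc (hσ v) (right_ne_zero_of_mul h)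
  rw [hratio, sum_range_sq_add_self_pow_two_pow, ← iterateFrobenius_def, hw, add_right_comm,
    CharTwo.add_self_eq_zero, zero_add]

theorem stmt_8 (n : ℕ) (hn : 0 < n) (q : ℕ) (hq : q = 2 ^ n)
    (K : Type*) [Field K] [Fintype K] (hcard : Fintype.card K = q ^ 4)
    (c : K) (hc : c ^ (q ^ 2 + 1) = 1) (hc1 : c ≠ 1) (v : K)
    (h : Tr4 q (c * v ^ (1 + q)) * Tr4 q (c ^ (1 + q) * v ^ (2 * q)) ≠ 0) :
    ∑ i ∈ Finset.range n,
        (Tr4 q (c * v ^ (1 + q)) / Tr4 q (c ^ (1 + q) * v ^ (2 * q))) ^ 2 ^ i = 1 :=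
  stmt_8_general n q hq K hcard c hc v h
end

section
/- Let q = 2^n and c ∈ F_{q^4} with c^{q^2+1} = 1, c ≠ 1. For b ∈ F_{q^4} with b^{1+q^2} = 1, set v = b^q + b^{q^2}. If Tr_{F_{q^4}/F_q}(c v^{1+q}) = 0, then b ∈ {1, c}. -/
/-!
In characteristic 2 the `q`-power Frobenius `φ` satisfies `φ (φ u) = u⁻¹` for `u = b`, `c`, `b / c`.
Writing the four conjugates of the trace argument in terms of `b`, `φ b`, `c`, `φ c` and clearing
denominators, the trace factors as `(b + φ b) (1 + b φ b) (c φ b + b φ c) (c φ c + b φ b)`.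
Each factor vanishing says that `u = b` or `u = b / c` satisfies `φ u = u` or `u φ u = 1`, and
together with `φ (φ u) = u⁻¹` either one forces `u ^ 2 = 1`, hence `u = 1`.
-/

section Frobenius

variable {K : Type*} [Field K] (φ : K →+* K) {q : ℕ}

theorem pow_sq_eq_apply_apply (hφ : ∀ x, φ x = x ^ q) (x : K) : x ^ (q ^ 2) = φ (φ x) := by
  rw [hφ, hφ, ← pow_mul, sq]

theorem Tr4_eq_of_apply_eq_pow (hφ : ∀ x, φ x = x ^ q) (x : K) :
    Tr4 q x = x + φ x + φ (φ x) + φ (φ (φ x)) := by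
  simp only [Tr4, hφ, ← pow_mul]
  ring_nf

theorem mul_Tr4_eq {b c : K} (hφ : ∀ x, φ x = x ^ q) (hb : b * φ (φ b) = 1)
    (hc : c * φ (φ c) = 1) :
    b ^ 2 * φ b ^ 2 * c * φ c * Tr4 q (c * (b ^ q + b ^ (q ^ 2)) ^ (1 + q)) =
      (b + φ b) * (1 + b * φ b) * (φ b * c + b * φ c) * (c * φ c + b * φ b) := by
  have hb0 : b ≠ 0 := left_ne_zero_of_mul_eq_one hb
  have hc0 : c ≠ 0 := left_ne_zero_of_mul_eq_one hc
  have hB0 : φ b ≠ 0 := (map_ne_zero φ).mpr hb0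
  have hC0 : φ c ≠ 0 := (map_ne_zero φ).mpr hc0
  simp only [pow_add, pow_one, pow_sq_eq_apply_apply φ hφ, ← hφ, Tr4_eq_of_apply_eq_pow φ hφ,
    map_mul, map_add, map_inv₀, eq_inv_of_mul_eq_one_right hb, eq_inv_of_mul_eq_one_right hc,
    inv_inv]
  field_simp
  ring

end Frobenius

section CharTwo

variable {K : Type*} [Field K] [CharP K 2] (φ : K →+* K) {u : K}

theorem eq_one_of_apply_eq_self (h2 : u * φ (φ u) = 1) (h : φ u = u) : u = 1 :=
  CharTwo.sq_injective (by rwa [h, h, ← sq, ← one_pow 2] at h2)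

theorem eq_one_of_mul_apply_eq_one (h2 : u * φ (φ u) = 1) (h : u * φ u = 1) : u = 1 := by
  have hφφ : u = φ (φ u) := left_inv_eq_right_inv h (by rw [← map_mul, h, map_one])
  exact CharTwo.sq_injective (by rwa [← hφφ, ← sq, ← one_pow 2] at h2)

end CharTwo

theorem stmt_9_general (n : ℕ) (q : ℕ) (hq : q = 2 ^ n)
    (K : Type*) [Field K] [Fintype K] (hcard : Fintype.card K = q ^ 4)
    (c : K) (hc : c ^ (q ^ 2 + 1) = 1)
    (b : K) (hb : b ^ (1 + q ^ 2) = 1)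
    (h : Tr4 q (c * (b ^ q + b ^ (q ^ 2)) ^ (1 + q)) = 0) :
    b = 1 ∨ b = c := by
  have : CharP K 2 := charP_of_card_eq_prime_pow (f := n * 4) (by rw [hcard, hq, pow_mul])
  set φ := iterateFrobenius K 2 n
  have hφ : ∀ x, φ x = x ^ q := fun x => by rw [hq, iterateFrobenius_def]
  rw [pow_add, pow_one, pow_sq_eq_apply_apply φ hφ] at hb
  rw [pow_succ', pow_sq_eq_apply_apply φ hφ] at hc
  have hc0 : c ≠ 0 := left_ne_zero_of_mul_eq_one hc
  have hC0 : φ c ≠ 0 := (map_ne_zero φ).mpr hc0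
  have hbc : b / c * φ (φ (b / c)) = 1 := by
    rw [map_div₀, map_div₀, div_mul_div_comm, hb, hc, div_one]
  have key := mul_Tr4_eq φ hφ hb hc
  rw [h, mul_zero, eq_comm] at key
  simp only [mul_eq_zero, CharTwo.add_eq_zero] at key
  rw [← div_eq_one_iff_eq hc0]
  rcases key with ((hφb | hφb) | hφbc) | hφbc
  · exact .inl (eq_one_of_apply_eq_self φ hb hφb.symm)
  · exact .inl (eq_one_of_mul_apply_eq_one φ hb hφb.symm)
  · refine .inr (eq_one_of_apply_eq_self φ hbc ?_)
    rwa [map_div₀, div_eq_div_iff hC0 hc0]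
  · refine .inr (eq_one_of_mul_apply_eq_one φ hbc ?_)
    rw [map_div₀, div_mul_div_comm, div_eq_one_iff_eq (mul_ne_zero hc0 hC0), hφbc]

theorem stmt_9 (n : ℕ) (hn : 0 < n) (q : ℕ) (hq : q = 2 ^ n)
    (K : Type*) [Field K] [Fintype K] (hcard : Fintype.card K = q ^ 4)
    (c : K) (hc : c ^ (q ^ 2 + 1) = 1) (hc1 : c ≠ 1)
    (b : K) (hb : b ^ (1 + q ^ 2) = 1)
    (h : Tr4 q (c * (b ^ q + b ^ (q ^ 2)) ^ (1 + q)) = 0) :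
    b = 1 ∨ b = c :=
  stmt_9_general n q hq K hcard c hc b hb h
end

section
/- Let q = 2^n and c ∈ F_{q^4} with c^{q^2+1} = 1, c ≠ 1. Write c = d^2 with d^{1+q^2} = 1. Then for all v ∈ F_{q^4}, Tr_{F_{q^4}/F_q}(c v^{q+1}) = ν^{1+q} and Tr_{F_{q^4}/F_q}(c^{1+q} v^{2q}) = (ν + ν^q)^2, where ν = d^{1+q^3} v + d^{q^2+q} v^{q^2} ∈ F_{q^2}. -/
def nu {K : Type*} [Field K] (q : ℕ) (d v : K) : K :=
  d ^ (1 + q ^ 3) * v + d ^ (q ^ 2 + q) * v ^ (q ^ 2)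

section

variable {K : Type*} [Field K] {q : ℕ}

theorem pow_pow_pow_pow_eq_self (hper : ∀ x : K, x ^ q ^ 4 = x) (x : K) :
    (((x ^ q) ^ q) ^ q) ^ q = x := by
  simpa only [← pow_mul, show q ^ 4 = q * q * q * q by ring] using hper x

theorem Tr4_sq [CharP K 2] (x : K) : Tr4 q (x ^ 2) = Tr4 q x ^ 2 := by
  simp only [Tr4, CharTwo.add_sq, ← pow_mul, mul_comm 2]

theorem nu_pow_sq_eq_self (hadd : ∀ x y : K, (x + y) ^ q = x ^ q + y ^ q)
    (hper : ∀ x : K, x ^ q ^ 4 = x) (d v : K) :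
    nu q d v ^ q ^ 2 = nu q d v := by
  have hper4 := pow_pow_pow_pow_eq_self hper
  simp only [nu, show q ^ 2 = q * q by ring, show q ^ 3 = q * q * q by ring, pow_add, pow_mul,
    pow_one, mul_pow, hadd, hper4]
  ring

theorem Tr4_sq_mul_pow_succ_eq_nu_pow (hadd : ∀ x y : K, (x + y) ^ q = x ^ q + y ^ q)
    (hper : ∀ x : K, x ^ q ^ 4 = x) {d : K} (hd : d ^ (1 + q ^ 2) = 1) (v : K) :
    Tr4 q (d ^ 2 * v ^ (q + 1)) = nu q d v ^ (1 + q) := by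
  have hper4 := pow_pow_pow_pow_eq_self hper
  have hnorm : d * (d ^ q) ^ q = 1 := by rwa [pow_add, pow_one, sq, pow_mul] at hd
  have hnorm_q : d ^ q * ((d ^ q) ^ q) ^ q = 1 := by rw [← mul_pow, hnorm, one_pow]
  simp only [Tr4, nu, show q ^ 2 = q * q by ring, show q ^ 3 = q * q * q by ring, pow_add, pow_mul,
    pow_one, mul_pow, hadd, hper4]
  linear_combination
    -(d ^ 2 * v * v ^ q + ((d ^ q) ^ q) ^ 2 * (v ^ q) ^ q * ((v ^ q) ^ q) ^ q) * hnorm_q -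
      ((((d ^ q) ^ q) ^ q) ^ 2 * v * ((v ^ q) ^ q) ^ q + (d ^ q) ^ 2 * v ^ q * (v ^ q) ^ q) * hnorm

theorem Tr4_pow_succ_mul_pow_eq_nu_add_nu_pow (hadd : ∀ x y : K, (x + y) ^ q = x ^ q + y ^ q)
    (hper : ∀ x : K, x ^ q ^ 4 = x) (d v : K) :
    Tr4 q (d ^ (1 + q) * v ^ q) = nu q d v + nu q d v ^ q := by
  have hper4 := pow_pow_pow_pow_eq_self hper
  simp only [Tr4, nu, show q ^ 2 = q * q by ring, show q ^ 3 = q * q * q by ring, pow_add, pow_mul,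
    pow_one, mul_pow, hadd, hper4]
  ring

end

theorem stmt_10_general (n : ℕ) (q : ℕ) (hq : q = 2 ^ n)
    (K : Type*) [Field K] [Fintype K] (hcard : Fintype.card K = q ^ 4)
    (c : K)
    (d : K) (hd : d ^ 2 = c) (hd1 : d ^ (1 + q ^ 2) = 1)
    (v : K) :
    (d ^ (1 + q ^ 3) * v + d ^ (q ^ 2 + q) * v ^ (q ^ 2)) ^ (q ^ 2) =
        d ^ (1 + q ^ 3) * v + d ^ (q ^ 2 + q) * v ^ (q ^ 2) ∧
    Tr4 q (c * v ^ (q + 1)) =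
        (d ^ (1 + q ^ 3) * v + d ^ (q ^ 2 + q) * v ^ (q ^ 2)) ^ (1 + q) ∧
    Tr4 q (c ^ (1 + q) * v ^ (2 * q)) =
        ((d ^ (1 + q ^ 3) * v + d ^ (q ^ 2 + q) * v ^ (q ^ 2)) +
          (d ^ (1 + q ^ 3) * v + d ^ (q ^ 2 + q) * v ^ (q ^ 2)) ^ q) ^ 2 := by
  subst hq hd
  have : Fact (Nat.Prime 2) := ⟨Nat.prime_two⟩
  have : CharP K 2 := charP_of_card_eq_prime_pow (hcard.trans (pow_mul 2 n 4).symm)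
  have hadd : ∀ x y : K, (x + y) ^ 2 ^ n = x ^ 2 ^ n + y ^ 2 ^ n := fun _ _ ↦ add_pow_char_pow ..
  have hper : ∀ x : K, x ^ (2 ^ n) ^ 4 = x := hcard ▸ FiniteField.pow_card
  refine ⟨nu_pow_sq_eq_self hadd hper d v, Tr4_sq_mul_pow_succ_eq_nu_pow hadd hper hd1 v, ?_⟩
  rw [show (d ^ 2) ^ (1 + 2 ^ n) * v ^ (2 * 2 ^ n) = (d ^ (1 + 2 ^ n) * v ^ 2 ^ n) ^ 2 by ring,
    Tr4_sq, Tr4_pow_succ_mul_pow_eq_nu_add_nu_pow hadd hper]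
  rfl

theorem stmt_10 (n : ℕ) (hn : 0 < n) (q : ℕ) (hq : q = 2 ^ n)
    (K : Type*) [Field K] [Fintype K] (hcard : Fintype.card K = q ^ 4)
    (c : K) (hc : c ^ (q ^ 2 + 1) = 1) (hc1 : c ≠ 1)
    (d : K) (hd : d ^ 2 = c) (hd1 : d ^ (1 + q ^ 2) = 1)
    (v : K) :
    (d ^ (1 + q ^ 3) * v + d ^ (q ^ 2 + q) * v ^ (q ^ 2)) ^ (q ^ 2) =
        d ^ (1 + q ^ 3) * v + d ^ (q ^ 2 + q) * v ^ (q ^ 2) ∧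
    Tr4 q (c * v ^ (q + 1)) =
        (d ^ (1 + q ^ 3) * v + d ^ (q ^ 2 + q) * v ^ (q ^ 2)) ^ (1 + q) ∧
    Tr4 q (c ^ (1 + q) * v ^ (2 * q)) =
        ((d ^ (1 + q ^ 3) * v + d ^ (q ^ 2 + q) * v ^ (q ^ 2)) +
          (d ^ (1 + q ^ 3) * v + d ^ (q ^ 2 + q) * v ^ (q ^ 2)) ^ q) ^ 2 :=
  stmt_10_general n q hq K hcard c d hd hd1 v
end

section
/- Let q = 2^n, c ∈ F_{q^4} with c^{q^2+1}=1, c ≠ 1, and b ∈ F_{q^4}; set v = b^q + b^{q^2} and write Tr for the relative trace from F_{q^4} to F_q. Then Tr(c^{1+q} v^{2q}) = 0 if and only if Tr(c(v + v^q)) + Tr(c^{q+1} v^q) = 0. -/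
section CyclicIdentities

variable {R : Type*} [CommRing R] {c₀ c₁ c₂ c₃ v₀ v₁ v₂ v₃ : R}

theorem mul_cyclic_sq_sum [CharP R 2] (h₀₂ : c₀ * c₂ = 1) (h₁₃ : c₁ * c₃ = 1) :
    c₀ * c₁ * (c₀ * c₁ * v₁ ^ 2 + c₁ * c₂ * v₂ ^ 2 + c₂ * c₃ * v₃ ^ 2 + c₃ * c₀ * v₀ ^ 2) =
      (c₀ * c₁ * v₁ + c₁ * v₂ + v₃ + c₀ * v₀) ^ 2 := by
  simp only [CharTwo.add_sq, mul_pow]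
  linear_combination (c₁ ^ 2 * v₂ ^ 2 + c₁ * c₃ * v₃ ^ 2) * h₀₂ + (v₃ ^ 2 + c₀ ^ 2 * v₀ ^ 2) * h₁₃

theorem mul_cyclic_linear_sum (h₀₂ : c₀ * c₂ = 1) (h₁₃ : c₁ * c₃ = 1)
    (hv : v₀ + v₁ + v₂ + v₃ = 0) :
    c₀ * c₁ * (c₀ * (v₀ + v₁) + c₁ * (v₁ + v₂) + c₂ * (v₂ + v₃) + c₃ * (v₃ + v₀) +
        (c₀ * c₁ * v₁ + c₁ * c₂ * v₂ + c₂ * c₃ * v₃ + c₃ * c₀ * v₀)) =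
      (1 + c₀) * (1 + c₁) * (c₀ * c₁ * v₁ + c₁ * v₂ + v₃ + c₀ * v₀) := by
  linear_combination (c₁ * (v₂ + v₃) + c₁ ^ 2 * v₂ + c₁ * c₃ * v₃) * h₀₂ +
    (v₃ + c₀ * (v₃ + v₀) + c₀ ^ 2 * v₀) * h₁₃ - c₀ * c₁ * hv

theorem cyclic_sq_sum_eq_zero_iff {K : Type*} [Field K] [CharP K 2]
    {c₀ c₁ c₂ c₃ v₀ v₁ v₂ v₃ : K} (h₀₂ : c₀ * c₂ = 1) (h₁₃ : c₁ * c₃ = 1)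
    (h₀ : 1 + c₀ ≠ 0) (h₁ : 1 + c₁ ≠ 0) (hv : v₀ + v₁ + v₂ + v₃ = 0) :
    c₀ * c₁ * v₁ ^ 2 + c₁ * c₂ * v₂ ^ 2 + c₂ * c₃ * v₃ ^ 2 + c₃ * c₀ * v₀ ^ 2 = 0 ↔
      c₀ * (v₀ + v₁) + c₁ * (v₁ + v₂) + c₂ * (v₂ + v₃) + c₃ * (v₃ + v₀) +
        (c₀ * c₁ * v₁ + c₁ * c₂ * v₂ + c₂ * c₃ * v₃ + c₃ * c₀ * v₀) = 0 := by
  have hc : c₀ * c₁ ≠ 0 :=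
    mul_ne_zero (left_ne_zero_of_mul_eq_one h₀₂) (left_ne_zero_of_mul_eq_one h₁₃)
  rw [← mul_eq_zero_iff_left hc, mul_cyclic_sq_sum h₀₂ h₁₃, pow_eq_zero_iff two_ne_zero,
    ← mul_eq_zero_iff_left (mul_ne_zero h₀ h₁), ← mul_cyclic_linear_sum h₀₂ h₁₃ hv,
    mul_eq_zero_iff_left hc]

end CyclicIdentities

section OrderFour

variable {K : Type*} [Field K] (σ : K →+* K)

def trace4 (x : K) : K :=
  x + σ x + σ (σ x) + σ (σ (σ x))

variable {σ}

theorem Tr4_eq_trace4 {q : ℕ} (hσ : ∀ x, σ x = x ^ q) (x : K) : Tr4 q x = trace4 σ x := by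
  simp only [Tr4, trace4, hσ, ← pow_mul]
  ring_nf

variable [CharP K 2] (hσ : ∀ x, σ (σ (σ (σ x))) = x)
include hσ

theorem trace4_add_map_self (x : K) : trace4 σ (x + σ x) = 0 := by
  simp only [trace4, map_add, hσ]
  linear_combination (x + σ x + σ (σ x) + σ (σ (σ x))) * (CharTwo.two_eq_zero : (2 : K) = 0)

theorem trace4_mul_sq_eq_zero_iff {c v : K} (hc : c * σ (σ c) = 1) (hc1 : c ≠ 1)
    (hv : trace4 σ v = 0) :
    trace4 σ (c * σ c * σ v ^ 2) = 0 ↔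
      trace4 σ (c * (v + σ v)) + trace4 σ (σ c * c * σ v) = 0 := by
  have h₁₃ : σ c * σ (σ (σ c)) = 1 := by simpa using congrArg σ hc
  have h₀ : 1 + c ≠ 0 := fun h => hc1 (CharTwo.add_eq_zero.1 h).symm
  have h₁ : 1 + σ c ≠ 0 := by
    rw [← map_one σ, ← map_add]
    exact (map_ne_zero σ).2 h₀
  convert cyclic_sq_sum_eq_zero_iff hc h₁₃ h₀ h₁ hv using 2
  · simp only [trace4, map_mul, map_pow, hσ]
  · simp only [trace4, map_mul, map_add, hσ]
    ring

end OrderFour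

theorem stmt_13_general (n : ℕ) (q : ℕ) (hq : q = 2 ^ n)
    (K : Type*) [Field K] [Fintype K] (hcard : Fintype.card K = q ^ 4)
    (c : K) (hc : c ^ (q ^ 2 + 1) = 1) (hc1 : c ≠ 1) (b : K) :
    Tr4 q (c ^ (1 + q) * (b ^ q + b ^ (q ^ 2)) ^ (2 * q)) = 0 ↔
      Tr4 q (c * ((b ^ q + b ^ (q ^ 2)) + (b ^ q + b ^ (q ^ 2)) ^ q)) +
        Tr4 q (c ^ (q + 1) * (b ^ q + b ^ (q ^ 2)) ^ q) = 0 := by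
  have : CharP K 2 := charP_of_card_eq_prime_pow (f := n * 4) (by rw [hcard, hq, pow_mul])
  set σ := iterateFrobenius K 2 n
  have hσ : ∀ x, σ x = x ^ q := fun x => by rw [iterateFrobenius_def, hq]
  have hσ4 : ∀ x, σ (σ (σ (σ x))) = x := fun x => by
    rw [hσ, hσ, hσ, hσ, ← pow_mul, ← pow_mul, ← pow_mul,
      show q * (q * (q * q)) = Fintype.card K by rw [hcard]; ring, FiniteField.pow_card]
  simp only [Tr4_eq_trace4 hσ, pow_add, pow_one, mul_comm 2 q, sq q, pow_mul, ← hσ] at hc ⊢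
  exact trace4_mul_sq_eq_zero_iff hσ4 (by rwa [mul_comm]) hc1 (trace4_add_map_self hσ4 (σ b))

theorem stmt_13 (n : ℕ) (hn : 0 < n) (q : ℕ) (hq : q = 2 ^ n)
    (K : Type*) [Field K] [Fintype K] (hcard : Fintype.card K = q ^ 4)
    (c : K) (hc : c ^ (q ^ 2 + 1) = 1) (hc1 : c ≠ 1) (b : K) :
    Tr4 q (c ^ (1 + q) * (b ^ q + b ^ (q ^ 2)) ^ (2 * q)) = 0 ↔
      Tr4 q (c * ((b ^ q + b ^ (q ^ 2)) + (b ^ q + b ^ (q ^ 2)) ^ q)) +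
        Tr4 q (c ^ (q + 1) * (b ^ q + b ^ (q ^ 2)) ^ q) = 0 :=
  stmt_13_general n q hq K hcard c hc hc1 b
end

section
/- Let q = 2^n and c ∈ F_{q^4} with c^{q^2+1}=1, c ≠ 1. The two elements c + c^{-1} and c^q + c^{-q} are distinct, lie in F_{q^2} \ F_q, and are exactly the two roots of u^2 + Tr(c) u + Tr(c^{1+q}) = 0, where Tr is the relative trace from F_{q^4} to F_q. -/
lemma eq_or_eq_inv_of_add_inv_eq_add_inv {K : Type*} [Field K] {x y : K} (hx : x ≠ 0)
    (hy : y ≠ 0) (h : x + x⁻¹ = y + y⁻¹) : y = x ∨ y = x⁻¹ := by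
  have key : (x - y) * (x * y - 1) = x * y * (x + x⁻¹ - (y + y⁻¹)) := by
    field_simp
    ring
  rw [h, sub_self, mul_zero, mul_eq_zero, sub_eq_zero, sub_eq_zero] at key
  exact key.imp Eq.symm eq_inv_of_mul_eq_one_right

namespace CharTwo

variable {R : Type*} [CommRing R] [CharP R 2] [NoZeroDivisors R]

lemma eq_one_of_mul_self_eq_one {x : R} (h : x * x = 1) : x = 1 :=
  sq_injective (by simpa [sq] using h)

lemma sq_add_add_mul_eq_zero_iff {a b u : R} :
    u ^ 2 + (a + b) * u + a * b = 0 ↔ u = a ∨ u = b := by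
  rw [show u ^ 2 + (a + b) * u + a * b = (u + a) * (u + b) by ring, mul_eq_zero,
    CharTwo.add_eq_zero, CharTwo.add_eq_zero]

end CharTwo

lemma Tr4_eq_iterateFrobenius {K : Type*} [Field K] (p n : ℕ) [ExpChar K p] (x : K) :
    Tr4 (p ^ n) x = x + iterateFrobenius K p n x
      + iterateFrobenius K p n (iterateFrobenius K p n x)
      + iterateFrobenius K p n (iterateFrobenius K p n (iterateFrobenius K p n x)) := by
  simp only [Tr4, iterateFrobenius_def, ← pow_mul]
  ring_nf

section InvolutiveUpToInverse

variable {K : Type*} [Field K] (σ : K →+* K) {c : K} (hc : σ (σ c) = c⁻¹)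
include hc

lemma map_map_add_inv_eq_add_inv : σ (σ (c + c⁻¹)) = c + c⁻¹ := by
  rw [map_add, map_inv₀, map_add, map_inv₀, hc, inv_inv, add_comm]

lemma add_inv_ne_map_add_inv [CharP K 2] (hc0 : c ≠ 0) (hc1 : c ≠ 1) :
    c + c⁻¹ ≠ σ (c + c⁻¹) := by
  intro h
  rw [map_add, map_inv₀] at h
  have hcc : c⁻¹ = c := by
    rcases eq_or_eq_inv_of_add_inv_eq_add_inv hc0 ((map_ne_zero σ).mpr hc0) h with h' | h'
    · rw [← hc, h', h']
    · rw [← hc, h', map_inv₀, h', inv_inv]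
  exact hc1 (CharTwo.eq_one_of_mul_self_eq_one (by nth_rw 1 [← hcc]; exact inv_mul_cancel₀ hc0))

lemma orbit_sum_eq : c + σ c + σ (σ c) + σ (σ (σ c)) = (c + c⁻¹) + σ (c + c⁻¹) := by
  rw [hc, map_inv₀, map_add, map_inv₀]
  ring

lemma orbit_sum_mul_map_eq :
    c * σ c + σ (c * σ c) + σ (σ (c * σ c)) + σ (σ (σ (c * σ c))) =
      (c + c⁻¹) * σ (c + c⁻¹) := by
  simp only [map_mul, map_add, hc, map_inv₀, inv_inv]
  ring

end InvolutiveUpToInverse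

theorem stmt_15_general (n : ℕ) (q : ℕ) (hq : q = 2 ^ n)
    (K : Type*) [Field K] [Fintype K] (hcard : Fintype.card K = q ^ 4)
    (c : K) (hc : c ^ (q ^ 2 + 1) = 1) (hc1 : c ≠ 1) :
    c + c⁻¹ ≠ c ^ q + (c⁻¹) ^ q ∧
    ((c + c⁻¹) ^ (q ^ 2) = c + c⁻¹ ∧ (c + c⁻¹) ^ q ≠ c + c⁻¹) ∧
    ((c ^ q + (c⁻¹) ^ q) ^ (q ^ 2) = c ^ q + (c⁻¹) ^ q ∧
      (c ^ q + (c⁻¹) ^ q) ^ q ≠ c ^ q + (c⁻¹) ^ q) ∧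
    (∀ u : K, u ^ 2 + Tr4 q c * u + Tr4 q (c ^ (1 + q)) = 0 ↔
      u = c + c⁻¹ ∨ u = c ^ q + (c⁻¹) ^ q) := by
  subst hq
  have : Fact (Nat.Prime 2) := ⟨Nat.prime_two⟩
  have : CharP K 2 := charP_of_card_eq_prime_pow (f := n * 4) (by rw [hcard, pow_mul])
  set σ := iterateFrobenius K 2 n
  have hσ (x : K) : x ^ 2 ^ n = σ x := rfl
  have hσσ (x : K) : x ^ (2 ^ n) ^ 2 = σ (σ x) := by rw [sq, pow_mul]; rfl
  have hc0 : c ≠ 0 := by rintro rfl; simp at hc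
  have hσc : σ (σ c) = c⁻¹ := by
    rw [← hσσ]; exact eq_inv_of_mul_eq_one_left (by rwa [← pow_succ])
  have hne := add_inv_ne_map_add_inv σ hσc hc0 hc1
  have hswap := map_map_add_inv_eq_add_inv σ hσc
  rw [Tr4_eq_iterateFrobenius, Tr4_eq_iterateFrobenius, pow_add, pow_one, hσ c,
    orbit_sum_eq σ hσc, orbit_sum_mul_map_eq σ hσc]
  simp only [hσσ, hσ, ← map_add]
  exact ⟨hne, ⟨hswap, hne.symm⟩, ⟨by rw [hswap], by rwa [hswap]⟩,
    fun u => CharTwo.sq_add_add_mul_eq_zero_iff⟩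

theorem stmt_15 (n : ℕ) (hn : 0 < n) (q : ℕ) (hq : q = 2 ^ n)
    (K : Type*) [Field K] [Fintype K] (hcard : Fintype.card K = q ^ 4)
    (c : K) (hc : c ^ (q ^ 2 + 1) = 1) (hc1 : c ≠ 1) :
    c + c⁻¹ ≠ c ^ q + (c⁻¹) ^ q ∧
    ((c + c⁻¹) ^ (q ^ 2) = c + c⁻¹ ∧ (c + c⁻¹) ^ q ≠ c + c⁻¹) ∧
    ((c ^ q + (c⁻¹) ^ q) ^ (q ^ 2) = c ^ q + (c⁻¹) ^ q ∧
      (c ^ q + (c⁻¹) ^ q) ^ q ≠ c ^ q + (c⁻¹) ^ q) ∧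
    (∀ u : K, u ^ 2 + Tr4 q c * u + Tr4 q (c ^ (1 + q)) = 0 ↔
      u = c + c⁻¹ ∨ u = c ^ q + (c⁻¹) ^ q) :=
  stmt_15_general n q hq K hcard c hc hc1
end

section
/- Let q = 2^n, c ∈ F_{q^4} with c^{q^2+1}=1, c ≠ 1, and b ∈ F_{q^4}, v = b^q + b^{q^2}, Tr the relative trace from F_{q^4} to F_q. Define G(u) = G_0 + G_1 u + G_2 u^2 + G_3 u^3 + G_4 u^4 with G_0 = Tr(c^2(b^{2q}+b^{2q^3})) + Tr(c^{2(1+q)}(b^{2q^2}+b^{2q^3})), G_1 = Tr(c(b^q+b^{q^3})) · Tr(c^{1+q}(b^{q^2}+b^{q^3})), G_2 = Tr(b^2) + Tr(c^2(b^{2q^2}+b^{q+q^2}+b^{q^2+q^3}+b^{q+q^3})) + Tr(c^{1+q})(1+b^{1+q+q^2+q^3}) + Tr(c^{1+q}(b^{q+q^2}+b^{1+q^3})), G_3 = Tr(c)(1+b^{1+q+q^2+q^3}) + Tr(b)·Tr(c b^{q^2}), and G_4 = (1+b^{q+q^3})(1+b^{1+q^2}). Then G(u) = (u^2 + Tr(c)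 u + Tr(c^{1+q})) · ((1+b^{q+q^3})(1+b^{1+q^2}) u^2 + A u + B) as polynomials in u, where A = Tr(c v^{q+1}) and B = Tr(c^{1+q} v^{2q}). -/
/-! `K` has characteristic 2, so `φ x = x ^ q` is a ring endomorphism of `K`, and `φ⁴ = id` since
`|K| = q ^ 4`. Hence `Tr4 q x` is the sum of the four conjugates `φⁱ x`. Writing `bᵢ = φⁱ b` and
`cᵢ = φⁱ c`, the hypothesis on `c` reads `c₀ c₂ = 1`, and applying `φ` gives `c₁ c₃ = 1`. The claim
becomes a polynomial identity in the `bᵢ, cᵢ` over a ring of characteristic 2 modulo these two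
relations. -/

-- Indices live in `Fin 4`, whose addition wraps around: `b (i + k)` is the `k`-th conjugate
-- of `b i`.
theorem quartic_factorization_of_conjugates {R : Type*} [CommRing R] [CharP R 2]
    (b c : Fin 4 → R) (h₀₂ : c 0 * c 2 = 1) (h₁₃ : c 1 * c 3 = 1) (u : R) :
    (∑ i, c i ^ 2 * (b (i + 1) ^ 2 + b (i + 3) ^ 2) +
        ∑ i, (c i * c (i + 1)) ^ 2 * (b (i + 2) ^ 2 + b (i + 3) ^ 2)) +
      (∑ i, c i * (b (i + 1) + b (i + 3))) * (∑ i, c i * c (i + 1) * (b (i + 2) + b (i + 3))) * u +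
      (∑ i, b i ^ 2 +
        ∑ i, c i ^ 2 * (b (i + 2) ^ 2 + b (i + 1) * b (i + 2) + b (i + 2) * b (i + 3) +
          b (i + 1) * b (i + 3)) +
        (∑ i, c i * c (i + 1)) * (1 + ∏ i, b i) +
        ∑ i, c i * c (i + 1) * (b (i + 1) * b (i + 2) + b i * b (i + 3))) * u ^ 2 +
      ((∑ i, c i) * (1 + ∏ i, b i) + (∑ i, b i) * ∑ i, c i * b (i + 2)) * u ^ 3 +
      (1 + b 1 * b 3) * (1 + b 0 * b 2) * u ^ 4 =
    (u ^ 2 + (∑ i, c i) * u + ∑ i, c i * c (i + 1)) *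
      ((1 + b 1 * b 3) * (1 + b 0 * b 2) * u ^ 2 +
        (∑ i, c i * (b (i + 1) + b (i + 2)) * (b (i + 2) + b (i + 3))) * u +
        ∑ i, c i * c (i + 1) * (b (i + 2) + b (i + 3)) ^ 2) := by
  simp only [Fin.sum_univ_four, Fin.prod_univ_four, Fin.reduceAdd]
  grind

theorem stmt_16_general (n : ℕ) (q : ℕ) (hq : q = 2 ^ n)
    (K : Type*) [Field K] [Fintype K] (hcard : Fintype.card K = q ^ 4)
    (c : K) (hc : c ^ (q ^ 2 + 1) = 1) (b : K)
    (v : K) (hv : v = b ^ q + b ^ (q ^ 2))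
    (G₀ G₁ G₂ G₃ G₄ A B : K)
    (hG0 : G₀ = Tr4 q (c ^ 2 * (b ^ (2 * q) + b ^ (2 * q ^ 3))) +
        Tr4 q (c ^ (2 * (1 + q)) * (b ^ (2 * q ^ 2) + b ^ (2 * q ^ 3))))
    (hG1 : G₁ = Tr4 q (c * (b ^ q + b ^ (q ^ 3))) *
        Tr4 q (c ^ (1 + q) * (b ^ (q ^ 2) + b ^ (q ^ 3))))
    (hG2 : G₂ = Tr4 q (b ^ 2) +
        Tr4 q (c ^ 2 * (b ^ (2 * q ^ 2) + b ^ (q + q ^ 2) + b ^ (q ^ 2 + q ^ 3) + b ^ (q + q ^ 3))) +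
        Tr4 q (c ^ (1 + q)) * (1 + b ^ (1 + q + q ^ 2 + q ^ 3)) +
        Tr4 q (c ^ (1 + q) * (b ^ (q + q ^ 2) + b ^ (1 + q ^ 3))))
    (hG3 : G₃ = Tr4 q c * (1 + b ^ (1 + q + q ^ 2 + q ^ 3)) + Tr4 q b * Tr4 q (c * b ^ (q ^ 2)))
    (hG4 : G₄ = (1 + b ^ (q + q ^ 3)) * (1 + b ^ (1 + q ^ 2)))
    (hA : A = Tr4 q (c * v ^ (q + 1)))
    (hB : B = Tr4 q (c ^ (1 + q) * v ^ (2 * q))) :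
    ∀ u : K,
      G₀ + G₁ * u + G₂ * u ^ 2 + G₃ * u ^ 3 + G₄ * u ^ 4 =
        (u ^ 2 + Tr4 q c * u + Tr4 q (c ^ (1 + q))) *
          ((1 + b ^ (q + q ^ 3)) * (1 + b ^ (1 + q ^ 2)) * u ^ 2 + A * u + B) := by
  intro u
  have : Fact (Nat.Prime 2) := ⟨Nat.prime_two⟩
  have : CharP K 2 :=
    charP_of_card_eq_prime_pow (f := 4 * n) (by rw [hcard, hq, ← pow_mul, mul_comm])
  set φ := iterateFrobenius K 2 n
  have hφ : ∀ x : K, x ^ q = φ x := fun x => by rw [hq]; rfl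
  have hφ2 : ∀ x : K, x ^ q ^ 2 = φ (φ x) := fun x => by rw [sq, pow_mul, hφ, hφ]
  have hφ3 : ∀ x : K, x ^ q ^ 3 = φ (φ (φ x)) := fun x => by rw [pow_succ, pow_mul, hφ2, hφ]
  have hφ4 : ∀ x : K, φ (φ (φ (φ x))) = x := fun x => by
    simpa only [hcard, pow_succ, pow_zero, one_mul, pow_mul, hφ] using FiniteField.pow_card x
  subst hv hG0 hG1 hG2 hG3 hG4 hA hB
  simp only [Tr4, pow_add, pow_mul, pow_one, hφ, hφ2, hφ3, map_add, map_mul, map_pow, hφ4] at hc ⊢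
  have hc₁₃ : φ c * φ (φ (φ c)) = 1 := by
    simpa only [map_mul, map_one, hφ4, mul_comm] using congrArg φ hc
  have key := quartic_factorization_of_conjugates ![b, φ b, φ (φ b), φ (φ (φ b))]
    ![c, φ c, φ (φ c), φ (φ (φ c))] ((mul_comm _ _).trans hc) hc₁₃ u
  simp only [Fin.sum_univ_four, Fin.prod_univ_four, Fin.reduceAdd, Matrix.cons_val_zero,
    Matrix.cons_val_one, Matrix.cons_val, zero_add] at key
  linear_combination key

theorem stmt_16 (n : ℕ) (hn : 0 < n) (q : ℕ) (hq : q = 2 ^ n)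
    (K : Type*) [Field K] [Fintype K] (hcard : Fintype.card K = q ^ 4)
    (c : K) (hc : c ^ (q ^ 2 + 1) = 1) (hc1 : c ≠ 1) (b : K)
    (v : K) (hv : v = b ^ q + b ^ (q ^ 2))
    (G₀ G₁ G₂ G₃ G₄ A B : K)
    (hG0 : G₀ = Tr4 q (c ^ 2 * (b ^ (2 * q) + b ^ (2 * q ^ 3))) +
        Tr4 q (c ^ (2 * (1 + q)) * (b ^ (2 * q ^ 2) + b ^ (2 * q ^ 3))))
    (hG1 : G₁ = Tr4 q (c * (b ^ q + b ^ (q ^ 3))) *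
        Tr4 q (c ^ (1 + q) * (b ^ (q ^ 2) + b ^ (q ^ 3))))
    (hG2 : G₂ = Tr4 q (b ^ 2) +
        Tr4 q (c ^ 2 * (b ^ (2 * q ^ 2) + b ^ (q + q ^ 2) + b ^ (q ^ 2 + q ^ 3) + b ^ (q + q ^ 3))) +
        Tr4 q (c ^ (1 + q)) * (1 + b ^ (1 + q + q ^ 2 + q ^ 3)) +
        Tr4 q (c ^ (1 + q) * (b ^ (q + q ^ 2) + b ^ (1 + q ^ 3))))
    (hG3 : G₃ = Tr4 q c * (1 + b ^ (1 + q + q ^ 2 + q ^ 3)) + Tr4 q b * Tr4 q (c * b ^ (q ^ 2)))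
    (hG4 : G₄ = (1 + b ^ (q + q ^ 3)) * (1 + b ^ (1 + q ^ 2)))
    (hA : A = Tr4 q (c * v ^ (q + 1)))
    (hB : B = Tr4 q (c ^ (1 + q) * v ^ (2 * q))) :
    ∀ u : K,
      G₀ + G₁ * u + G₂ * u ^ 2 + G₃ * u ^ 3 + G₄ * u ^ 4 =
        (u ^ 2 + Tr4 q c * u + Tr4 q (c ^ (1 + q))) *
          ((1 + b ^ (q + q ^ 3)) * (1 + b ^ (1 + q ^ 2)) * u ^ 2 + A * u + B) :=
  stmt_16_general n q hq K hcard c hc b v hv G₀ G₁ G₂ G₃ G₄ A B hG0 hG1 hG2 hG3 hG4 hA hB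
end
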